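/- arXiv:0805.2907 — 2 statements merged into one kernel-verified Lean document; each statement's English description precedes it below -/
import Mathlib

section
/- If g ∈ DM(X∩r) and t is a rational subspace with t ∩ r ≠ r, then ∇_{X\t}(P_{X\r}^{F} * g) = 0 for any regular face F for X\r. -/
open Function

attribute [local instance] Classical.propDecidable

noncomputable section

/-- The lattice `Γ = ι → ℤ`. -/
abbrev ZLat (ι : Type*) := ι → ℤ
/-- The ambient real vector space `V = Γ ⊗ ℝ = ι → ℝ`. -/
abbrev Amb (ι : Type*) := ι → ℝ

variable {ι : Type*} [Fintype ι]

/-- Embedding of the lattice into the ambient space. -/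
def castV (γ : ZLat ι) : Amb ι := fun i => (γ i : ℝ)

/-- Standard pairing on `V`. -/
def dotR (u v : Amb ι) : ℝ := ∑ i, u i * v i

/-- The difference operator `∇ₐ`. -/
def nab (a : ZLat ι) (f : ZLat ι → ℤ) : ZLat ι → ℤ := fun b => f b - f (b - a)

/-- `∇_Y = ∏_{a ∈ Y} ∇ₐ` for a list `Y`. -/
def nabL (Y : List (ZLat ι)) (f : ZLat ι → ℤ) : ZLat ι → ℤ := Y.foldr nab f

/-- Delta function at `0`. -/
def delta0 : ZLat ι → ℤ := fun γ => if γ = 0 then 1 else 0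

/-- The partition function of a list `Y`: the number of ways of writing `γ` as a
nonnegative integral combination of the entries of `Y`. -/
def partFn (Y : List (ZLat ι)) : ZLat ι → ℤ :=
  fun γ => Nat.card {k : Fin Y.length → ℕ // ∑ i, (k i : ℤ) • Y.get i = γ}

/-- The cone `C(Y)` of nonnegative real combinations of the entries of `Y`. -/
def coneC (Y : List (ZLat ι)) : Set (Amb ι) :=
  {v | ∃ t : Fin Y.length → ℝ, (∀ i, 0 ≤ t i) ∧ v = ∑ i, t i • castV (Y.get i)}

/-- `C(Y)` is pointed: it contains no line. -/
def PointedList (Y : List (ZLat ι)) : Prop :=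
  ∀ v ∈ coneC Y, -v ∈ coneC Y → v = 0

/-- The zonotope `B(Y) = {∑ tᵢ aᵢ : 0 ≤ tᵢ ≤ 1}`. -/
def zono (Y : List (ZLat ι)) : Set (Amb ι) :=
  {v | ∃ t : Fin Y.length → ℝ, (∀ i, 0 ≤ t i ∧ t i ≤ 1) ∧ v = ∑ i, t i • castV (Y.get i)}

/-- The real span of a list of lattice vectors. -/
def spanOf (Y : List (ZLat ι)) : Submodule ℝ (Amb ι) :=
  Submodule.span ℝ (castV '' {a | a ∈ Y})

/-- A subspace is rational (relative to `X`) if it is spanned by a sublist of `X`. -/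
def IsRational (X : List (ZLat ι)) (r : Submodule ℝ (Amb ι)) : Prop :=
  ∃ Y : List (ZLat ι), (∀ a ∈ Y, a ∈ X) ∧ r = spanOf Y

/-- The sublist `X ∩ r`. -/
def inSub (X : List (ZLat ι)) (r : Submodule ℝ (Amb ι)) : List (ZLat ι) :=
  X.filter (fun a => decide (castV a ∈ r))

/-- The sublist `X \ r`. -/
def outSub (X : List (ZLat ι)) (r : Submodule ℝ (Amb ι)) : List (ZLat ι) :=
  X.filter (fun a => decide (castV a ∉ r))

/-- The operator `∇_{X \ r}`. -/
def nabOut (X : List (ZLat ι)) (r : Submodule ℝ (Amb ι)) (f : ZLat ι → ℤ) : ZLat ι → ℤ :=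
  nabL (outSub X r) f

/-- The space `𝓕(X)`: `∇_{X\r} f` is supported on `Γ ∩ r` for every rational `r`. -/
def memF (X : List (ZLat ι)) (f : ZLat ι → ℤ) : Prop :=
  ∀ r, IsRational X r → support (nabOut X r f) ⊆ {γ | castV γ ∈ r}

/-- The Dahmen–Micchelli space of a list `Y` (inside its span): `f` is killed by
`∇_{Y \ H}` for every rational hyperplane `H` of the span of `Y`. -/
def memDM (Y : List (ZLat ι)) (f : ZLat ι → ℤ) : Prop :=
  ∀ H, IsRational Y H → Module.finrank ℝ H + 1 = Module.finrank ℝ (spanOf Y) →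
    nabOut Y H f = 0

/-- `𝓕(X ∩ r)`, viewed as functions on `Γ` supported on `Γ ∩ r`. -/
def memFrel (X : List (ZLat ι)) (r : Submodule ℝ (Amb ι)) (g : ZLat ι → ℤ) : Prop :=
  support g ⊆ {γ | castV γ ∈ r} ∧ memF (inSub X r) g

/-- `DM(X ∩ r)`, viewed as functions on `Γ` supported on `Γ ∩ r`. -/
def memDMrel (X : List (ZLat ι)) (r : Submodule ℝ (Amb ι)) (g : ZLat ι → ℤ) : Prop :=
  support g ⊆ {γ | castV γ ∈ r} ∧ memDM (inSub X r) g

/-- `u` is a regular vector for `X \ r`:  `u ∈ r^⊥` and `⟨u, a⟩ ≠ 0` for all `a ∈ X \ r`.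
It determines the regular face `F` containing it. -/
def Reg (X : List (ZLat ι)) (r : Submodule ℝ (Amb ι)) (u : Amb ι) : Prop :=
  (∀ v ∈ r, dotR u v = 0) ∧ ∀ a ∈ X, castV a ∉ r → dotR u (castV a) ≠ 0

/-- The sublist `B ⊆ X \ r` of elements negative on `u`. -/
def negPart (X : List (ZLat ι)) (r : Submodule ℝ (Amb ι)) (u : Amb ι) : List (ZLat ι) :=
  (outSub X r).filter (fun a => decide (dotR u (castV a) < 0))

/-- The list `[A, -B]`: entries of `X \ r`, with sign flipped on the part negative on `u`. -/
def signedOut (X : List (ZLat ι)) (r : Submodule ℝ (Amb ι)) (u : Amb ι) : List (ZLat ι) :=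
  (outSub X r).map (fun a => if 0 < dotR u (castV a) then a else -a)

/-- The special function `𝓟_{X\r}^F` for the face `F ∋ u`:
`(-1)^{|B|} τ_{-∑_{b∈B} b} (∏_{a∈A} ∑_k δ_{ka}) * (∏_{b∈B} ∑_k δ_{-kb})`. -/
def PF (X : List (ZLat ι)) (r : Submodule ℝ (Amb ι)) (u : Amb ι) : ZLat ι → ℤ :=
  fun γ => (-1) ^ (negPart X r u).length *
    partFn (signedOut X r u) (γ + (negPart X r u).sum)

/-- The support region `-∑_{b∈B} b + C(A, -B)` of `𝓟_{X\r}^F`, as a subset of `Γ`. -/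
def PFsupp (X : List (ZLat ι)) (r : Submodule ℝ (Amb ι)) (u : Amb ι) : Set (ZLat ι) :=
  {γ | castV (γ + (negPart X r u).sum) ∈ coneC (signedOut X r u)}

/-- Convolution of two functions on the lattice. -/
def conv (f g : ZLat ι → ℤ) : ZLat ι → ℤ := fun γ => ∑ᶠ μ, f (γ - μ) * g μ

/-- The union of all rational hyperplanes (inside the span of `Y`). -/
def hyperUnion (Y : List (ZLat ι)) : Set (Amb ι) :=
  {v | ∃ H, IsRational Y H ∧ Module.finrank ℝ H + 1 = Module.finrank ℝ (spanOf Y) ∧ v ∈ H}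

/-- A tope for `Y`: a connected component of the complement (in the span of `Y`) of the
union of the hyperplanes spanned by sublists of `Y`. -/
def IsTope (Y : List (ZLat ι)) (τ : Set (Amb ι)) : Prop :=
  ∃ v ∈ (spanOf Y : Set (Amb ι)) \ hyperUnion Y,
    τ = connectedComponentIn ((spanOf Y : Set (Amb ι)) \ hyperUnion Y) v

/-- The set of singular vectors: the union of the cones `C(Y)` over sublists `Y` of `X`
not spanning `V`. -/
def singSet (X : List (ZLat ι)) : Set (Amb ι) :=
  {v | ∃ Y : List (ZLat ι), (∀ a ∈ Y, a ∈ X) ∧ spanOf Y ≠ ⊤ ∧ v ∈ coneC Y}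

/-- A big cell: a connected component of the complement of the set of singular vectors. -/
def IsBigCell (X : List (ZLat ι)) (c : Set (Amb ι)) : Prop :=
  ∃ v ∈ (singSet X)ᶜ, c = connectedComponentIn (singSet X)ᶜ v

/-- Minkowski difference of sets, `A - B`. -/
def sdiffSet (A B : Set (Amb ι)) : Set (Amb ι) := {x | ∃ a ∈ A, ∃ b ∈ B, x = a - b}

/-!
Write `Y = X ∩ r`. Since `t ∩ r ≠ r`, the span of `Y ∩ t` is a proper rational subspace of
`r`, hence lies in a rational hyperplane `H` of `r`; every element of `Y \ H` then lies outside
`t`, so `∇_{Y\H}` is a factor of `∇_{X\t}`. Its elements lie in `r ⊆ u^⊥`, and along `u^⊥` the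
function `𝓟_{X\r}^F` has finite support, so `∇_{Y\H}` can be moved past the convolution onto
`g`, where it vanishes because `g ∈ DM(X∩r)`.
-/

section Lattice

variable {ι : Type*}

def castHom : ZLat ι →+ Amb ι := (Int.castAddHom ℝ).compLeft ι

def latticeIn (r : Submodule ℝ (Amb ι)) : AddSubgroup (ZLat ι) :=
  r.toAddSubgroup.comap castHom

def dotCast [Fintype ι] (u : Amb ι) : ZLat ι →+ ℝ where
  toFun γ := dotR u (castV γ)
  map_zero' := by simp [dotR, castV]
  map_add' x y := by simp [dotR, castV, mul_add, Finset.sum_add_distrib]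

end Lattice

section Difference

variable {ι : Type*}

instance : LeftCommutative (nab (ι := ι)) :=
  ⟨fun a b f => by funext c; simp only [nab]; rw [sub_right_comm c a b]; ring⟩

lemma nabL_cons (a : ZLat ι) (L : List (ZLat ι)) (f : ZLat ι → ℤ) :
    nabL (a :: L) f = nab a (nabL L f) := rfl

lemma nabL_perm {L L' : List (ZLat ι)} (h : L.Perm L') (f : ZLat ι → ℤ) :
    nabL L f = nabL L' f := h.foldr_eq f

lemma nabL_append (A B : List (ZLat ι)) (f : ZLat ι → ℤ) :
    nabL (A ++ B) f = nabL A (nabL B f) := List.foldr_append ..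

lemma nabL_zero (L : List (ZLat ι)) : nabL L (0 : ZLat ι → ℤ) = 0 := by
  induction L with
  | nil => rfl
  | cons a L ih => funext b; simp [nabL_cons, nab, ih]

lemma nabL_eq_zero_of_sublist {C L : List (ZLat ι)} (hCL : C.Sublist L) {f : ZLat ι → ℤ}
    (hC : nabL C f = 0) : nabL L f = 0 := by
  obtain ⟨D, hD⟩ := hCL.exists_perm_append
  rw [nabL_perm (hD.trans List.perm_append_comm), nabL_append, hC, nabL_zero]

end Difference

section Convolution

variable {ι : Type*} (G : AddSubgroup (ZLat ι)) {f h : ZLat ι → ℤ}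

lemma support_nab_subset (hh : support h ⊆ G) {a : ZLat ι} (ha : a ∈ G) :
    support (nab a h) ⊆ G := by
  intro γ hγ
  by_cases h0 : h γ = 0
  · have : h (γ - a) ≠ 0 := fun h1 => hγ (by simp [nab, h0, h1])
    simpa using G.add_mem (hh this) ha
  · exact hh h0

lemma support_nabL_subset (hh : support h ⊆ G) {L : List (ZLat ι)} (hL : ∀ a ∈ L, a ∈ G) :
    support (nabL L h) ⊆ G := by
  induction L with
  | nil => exact hh
  | cons a L ih =>
    exact support_nab_subset G (ih fun b hb => hL b (.tail a hb)) (hL a (.head L))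

variable {G}

/-- `conv` is a `finsum`, which is `0` on infinite supports: `hf` and `hh` make both
convolution sums finite. -/
lemma conv_nab (hf : ∀ γ, {μ | μ ∈ G ∧ f (γ - μ) ≠ 0}.Finite) (hh : support h ⊆ G)
    {a : ZLat ι} (ha : a ∈ G) : conv f (nab a h) = nab a (conv f h) := by
  funext γ
  have hfin₁ : (support fun μ => f (γ - μ) * h μ).Finite :=
    (hf γ).subset fun μ hμ => ⟨hh (right_ne_zero_of_mul hμ), left_ne_zero_of_mul hμ⟩
  have hfin₂ : (support fun μ => f (γ - μ) * h (μ - a)).Finite :=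
    (hf γ).subset fun μ hμ =>
      ⟨by simpa using G.add_mem (hh (right_ne_zero_of_mul hμ)) ha, left_ne_zero_of_mul hμ⟩
  have hshift : ∑ᶠ μ, f (γ - μ) * h (μ - a) = ∑ᶠ ν, f (γ - a - ν) * h ν := by
    rw [← finsum_comp_equiv (Equiv.addRight a)]
    refine finsum_congr fun ν => ?_
    simp only [Equiv.coe_addRight, add_sub_cancel_right, sub_add_eq_sub_sub_swap]
  simp only [conv, nab, mul_sub]
  rw [finsum_sub_distrib hfin₁ hfin₂, hshift]

lemma conv_nabL (hf : ∀ γ, {μ | μ ∈ G ∧ f (γ - μ) ≠ 0}.Finite) (hh : support h ⊆ G)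
    {L : List (ZLat ι)} (hL : ∀ a ∈ L, a ∈ G) : conv f (nabL L h) = nabL L (conv f h) := by
  induction L with
  | nil => rfl
  | cons a L ih =>
    have hL' : ∀ b ∈ L, b ∈ G := fun b hb => hL b (.tail a hb)
    rw [nabL_cons, nabL_cons, conv_nab hf (support_nabL_subset G hh hL') (hL a (.head L)),
      ih hL']

end Convolution

section Finiteness

variable {ι : Type*} [Fintype ι]

/-- The coefficients `k` of such a `β` satisfy `kᵢ ⟨u, vᵢ⟩ ≤ c`. -/
lemma finite_partFn_ne_zero_dotCast_eq {V : List (ZLat ι)} {u : Amb ι}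
    (hV : ∀ v ∈ V, 0 < dotCast u v) (c : ℝ) :
    {β | partFn V β ≠ 0 ∧ dotCast u β = c}.Finite := by
  set d : Fin V.length → ℝ := fun i => dotCast u (V.get i)
  have hd : ∀ i, 0 < d i := fun i => hV _ (V.get_mem i)
  have hbox : (Set.univ.pi fun i : Fin V.length => Set.Iic ⌊c / d i⌋₊).Finite :=
    Set.Finite.pi fun _ => Set.finite_Iic _
  refine (hbox.image fun k => ∑ i, (k i : ℤ) • V.get i).subset ?_
  rintro β ⟨hβ, rfl⟩
  obtain ⟨⟨k, rfl⟩⟩ := (Nat.card_ne_zero.1 (Nat.cast_ne_zero.1 hβ)).1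
  refine ⟨k, fun i _ => Nat.le_floor ((le_div_iff₀ (hd i)).2 ?_), rfl⟩
  have hlevel : dotCast u (∑ j, (k j : ℤ) • V.get j) = ∑ j, (k j : ℝ) * d j := by
    rw [map_sum]
    refine Finset.sum_congr rfl fun j _ => ?_
    rw [map_zsmul, zsmul_eq_mul, Int.cast_natCast]
  rw [hlevel]
  exact Finset.single_le_sum (fun j _ => mul_nonneg (Nat.cast_nonneg _) (hd j).le)
    (Finset.mem_univ i)

variable {X : List (ZLat ι)} {r : Submodule ℝ (Amb ι)} {u : Amb ι}

lemma Reg.dotCast_pos_of_mem_signedOut (hu : Reg X r u) {v : ZLat ι}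
    (hv : v ∈ signedOut X r u) : 0 < dotCast u v := by
  obtain ⟨a, ha, rfl⟩ := List.mem_map.1 hv
  have ha' := List.mem_filter.1 ha
  have hne : dotCast u a ≠ 0 := hu.2 a ha'.1 (by simpa using ha'.2)
  split_ifs with hpos
  · exact hpos
  · rw [map_neg]
    exact neg_pos.2 (lt_of_le_of_ne (not_lt.1 hpos) hne)

lemma Reg.finite_PF_sections (hu : Reg X r u) (γ : ZLat ι) :
    {μ | μ ∈ latticeIn r ∧ PF X r u (γ - μ) ≠ 0}.Finite := by
  set s := (negPart X r u).sum
  have hfin := finite_partFn_ne_zero_dotCast_eq (fun v => hu.dotCast_pos_of_mem_signedOut)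
    (dotCast u (γ + s))
  refine (hfin.preimage (Equiv.subLeft (γ + s)).injective.injOn).subset ?_
  rintro μ ⟨hμr, hμ⟩
  have hμu : dotCast u μ = 0 := hu.1 _ hμr
  refine ⟨fun h0 => hμ ?_, ?_⟩
  · rw [Equiv.subLeft_apply, ← sub_add_eq_add_sub] at h0
    simp only [PF, s, h0, mul_zero]
  · simp [map_sub, hμu]

end Finiteness

section Rational

variable {ι : Type*}

lemma castV_mem_spanOf {Y : List (ZLat ι)} {a : ZLat ι} (h : a ∈ Y) : castV a ∈ spanOf Y :=
  Submodule.subset_span ⟨a, h, rfl⟩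

lemma spanOf_mono {Z Y : List (ZLat ι)} (h : ∀ a ∈ Z, a ∈ Y) : spanOf Z ≤ spanOf Y :=
  Submodule.span_mono (Set.image_mono h)

lemma mem_inSub {X : List (ZLat ι)} {r : Submodule ℝ (Amb ι)} {a : ZLat ι} :
    a ∈ inSub X r ↔ a ∈ X ∧ castV a ∈ r := by
  simp [inSub]

lemma mem_outSub {X : List (ZLat ι)} {r : Submodule ℝ (Amb ι)} {a : ZLat ι} :
    a ∈ outSub X r ↔ a ∈ X ∧ castV a ∉ r := by
  simp [outSub]

lemma spanOf_inSub_le (X : List (ZLat ι)) (r : Submodule ℝ (Amb ι)) : spanOf (inSub X r) ≤ r :=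
  Submodule.span_le.2 <| by
    rintro - ⟨a, ha, rfl⟩
    exact (mem_inSub.1 ha).2

lemma spanOf_inSub {X : List (ZLat ι)} {r : Submodule ℝ (Amb ι)} (hr : IsRational X r) :
    spanOf (inSub X r) = r := by
  obtain ⟨Y, hY, rfl⟩ := hr
  refine le_antisymm (spanOf_inSub_le X _) (spanOf_mono fun a ha => ?_)
  exact mem_inSub.2 ⟨hY a ha, castV_mem_spanOf ha⟩

lemma isRational_spanOf_inSub (Y : List (ZLat ι)) (t : Submodule ℝ (Amb ι)) :
    IsRational Y (spanOf (inSub Y t)) :=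
  ⟨inSub Y t, fun _ ha => (mem_inSub.1 ha).1, rfl⟩

lemma IsRational.sup_span_singleton {Y : List (ZLat ι)} {W : Submodule ℝ (Amb ι)}
    (hW : IsRational Y W) {a : ZLat ι} (ha : a ∈ Y) : IsRational Y (W ⊔ ℝ ∙ castV a) := by
  obtain ⟨Z, hZ, rfl⟩ := hW
  refine ⟨a :: Z, fun b hb => (List.mem_cons.1 hb).elim (· ▸ ha) (hZ b), ?_⟩
  have hset : {b | b ∈ a :: Z} = insert a {b | b ∈ Z} := by ext; simp
  simp only [spanOf]
  rw [hset, Set.image_insert_eq, Submodule.span_insert, sup_comm]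

lemma outSub_inSub_sublist {X : List (ZLat ι)} {r t H : Submodule ℝ (Amb ι)}
    (hH : spanOf (inSub (inSub X r) t) ≤ H) : (outSub (inSub X r) H).Sublist (outSub X t) := by
  have hX : (outSub (inSub X r) H).Sublist X := List.filter_sublist.trans List.filter_sublist
  have hnt : ∀ a ∈ outSub (inSub X r) H, decide (castV a ∉ t) = true := by
    intro a ha
    obtain ⟨haY, haH⟩ := mem_outSub.1 ha
    exact decide_eq_true fun hat => haH (hH (castV_mem_spanOf (mem_inSub.2 ⟨haY, hat⟩)))
  have := hX.filter fun a => decide (castV a ∉ t)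
  rwa [List.filter_eq_self.2 hnt] at this

variable [Fintype ι]

/-- Induction on the codimension: while it exceeds one, adjoin an element of `Y` outside `W`. -/
lemma IsRational.exists_hyperplane_le {Y : List (ZLat ι)} {W : Submodule ℝ (Amb ι)}
    (hW : IsRational Y W) (hlt : W < spanOf Y) :
    ∃ H, IsRational Y H ∧ Module.finrank ℝ H + 1 = Module.finrank ℝ (spanOf Y) ∧ W ≤ H := by
  induction hn : Module.finrank ℝ (spanOf Y) - Module.finrank ℝ W using Nat.strong_induction_on
    generalizing W with
  | _ n ih =>
  have hrank := Submodule.finrank_lt_finrank_of_lt hlt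
  by_cases hco : Module.finrank ℝ W + 1 = Module.finrank ℝ (spanOf Y)
  · exact ⟨W, hW, hco, le_rfl⟩
  obtain ⟨a, haY, haW⟩ : ∃ a ∈ Y, castV a ∉ W := by
    by_contra! hall
    exact hlt.not_ge (Submodule.span_le.2 (by rintro - ⟨a, ha, rfl⟩; exact hall a ha))
  obtain ⟨W', hW'rat, hWW', hW'rank, hW'Y⟩ : ∃ W', IsRational Y W' ∧ W < W' ∧
      Module.finrank ℝ W' ≤ Module.finrank ℝ W + 1 ∧ W' < spanOf Y := by
    have ha0 : castV a ≠ 0 := fun h => haW (h ▸ W.zero_mem)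
    have hrank' : Module.finrank ℝ ↥(W ⊔ ℝ ∙ castV a) ≤ Module.finrank ℝ W + 1 :=
      (Submodule.finrank_add_le_finrank_add_finrank _ _).trans_eq
        (congrArg _ (finrank_span_singleton ha0))
    refine ⟨_, hW.sup_span_singleton haY, lt_of_le_of_ne le_sup_left fun h => haW ?_, hrank',
      lt_of_le_of_ne (sup_le hlt.le ?_) fun h => ?_⟩
    · exact h ▸ Submodule.mem_sup_right (Submodule.mem_span_singleton_self _)
    · exact (Submodule.span_singleton_le_iff_mem _ _).2 (castV_mem_spanOf haY)
    · rw [h] at hrank'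
      omega
  have hW'lt := Submodule.finrank_lt_finrank_of_lt hWW'
  obtain ⟨H, hH, hHrank, hW'H⟩ := ih _ (by omega) hW'rat hW'Y rfl
  exact ⟨H, hH, hHrank, hWW'.le.trans hW'H⟩

end Rational

theorem nabOut_PF_DM_zero_general {ι : Type*} [Fintype ι] (X : List (ZLat ι))
    (r t : Submodule ℝ (Amb ι)) (hr : IsRational X r)
    (hrt : t ⊓ r ≠ r) (u : Amb ι) (hu : Reg X r u)
    (g : ZLat ι → ℤ) (hg : memDMrel X r g) :
    nabOut X t (conv (PF X r u) g) = 0 := by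
  set Y := inSub X r
  have hspanY : spanOf Y = r := spanOf_inSub hr
  have hlt : spanOf (inSub Y t) < spanOf Y := by
    refine lt_of_le_of_ne (spanOf_mono fun a ha => (mem_inSub.1 ha).1) fun h => hrt ?_
    exact inf_eq_right.2 (hspanY ▸ h ▸ spanOf_inSub_le Y t)
  obtain ⟨H, hH, hHrank, hYtH⟩ := (isRational_spanOf_inSub Y t).exists_hyperplane_le hlt
  have hCr : ∀ a ∈ outSub Y H, a ∈ latticeIn r := fun a ha =>
    (mem_inSub.1 (mem_outSub.1 ha).1).2
  have hgH : nabL (outSub Y H) g = 0 := hg.2 H hH hHrank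
  refine nabL_eq_zero_of_sublist (outSub_inSub_sublist hYtH) ?_
  rw [← conv_nabL hu.finite_PF_sections hg.1 hCr, hgH]
  funext γ
  simp [conv]

/-- If `g ∈ DM(X∩r)` and `t` is a rational subspace with `t ∩ r ≠ r`, then
`∇_{X\t}(𝓟_{X\r}^F * g) = 0` for any regular face `F ∋ u` for `X\r`. -/
theorem nabOut_PF_DM_zero {ι : Type*} [Fintype ι] (X : List (ZLat ι))
    (hX0 : ∀ a ∈ X, a ≠ 0) (hspan : spanOf X = ⊤)
    (r t : Submodule ℝ (Amb ι)) (hr : IsRational X r) (ht : IsRational X t)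
    (hrt : t ⊓ r ≠ r) (u : Amb ι) (hu : Reg X r u)
    (g : ZLat ι → ℤ) (hg : memDMrel X r g) :
    nabOut X t (conv (PF X r u) g) = 0 :=
  nabOut_PF_DM_zero_general X r t hr hrt u hu g hg
end
end

section
/- (Localization theorem) Let τ be a tope and let F = (F_r) be an X-regular collection that is non-positive on τ (for each proper rational subspace r there exist u ∈ F_r and x₀ ∈ τ with ⟨u, x₀⟩ < 0). If f ∈ F(X) has F-decomposition f = Σ_r f_r, then the component f_V lies in DM(X) and f(γ) = f_V(γ) for all γ ∈ Γ ∩ (τ - B(X)), where B(X) = {Σ t_i a_i : 0 ≤ t_i ≤ 1} is the zonotope of X. -/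
/-!
For a proper rational subspace `r`, the term `𝓟_{X\r}^{F_r} * f_r` is supported in
`-∑_{b∈B} b + C(A, -B) + r`. If it did not vanish at `γ = y - z` with `y ∈ τ`, `z ∈ B(X)`, then
`y` would lie in the polyhedral cone `S = r + C(A, -B)`, since `z + ∑_{b∈B} (-b) ∈ S`. The cone `S`
is closed and, by Carathéodory, its boundary lies in rational hyperplanes, which the tope avoids;
so the connected set `τ` lies inside `S` or outside it. The point `x₀ ∈ τ` with `⟨u_r, x₀⟩ < 0`
is outside, as `u_r ≥ 0` on `S`. Hence only the term `r = V` survives on `Γ ∩ (τ - B(X))`, and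
there `𝓟_∅ = δ₀`.
-/

open Function

attribute [local instance] Classical.propDecidable

open Submodule PointedCone

namespace PointedCone

variable {E : Type*} [AddCommGroup E] [Module ℝ E]

theorem mem_hull_finset_iff {s : Finset E} {x : E} :
    x ∈ hull ℝ (s : Set E) ↔ ∃ f : E → ℝ, (∀ v ∈ s, 0 ≤ f v) ∧ ∑ v ∈ s, f v • v = x := by
  constructor
  · intro hx
    obtain ⟨f, -, rfl⟩ := mem_span_finset.1 hx
    exact ⟨fun v => f v, fun v _ => (f v).2, rfl⟩
  · rintro ⟨f, hf, rfl⟩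
    exact sum_mem fun v hv => smul_mem _ (hf v hv) (subset_hull hv)

theorem nonneg_of_mem_hull {s : Set E} (φ : E →ₗ[ℝ] ℝ) (hs : ∀ v ∈ s, 0 ≤ φ v) {x : E}
    (hx : x ∈ hull ℝ s) : 0 ≤ φ x :=
  (span_le (p := comap φ (positive ℝ ℝ))).2 hs hx

theorem span_subset_hull {s t : Set E} (hs : ∀ v ∈ s, v ∈ t ∧ -v ∈ t) :
    (span ℝ s : Set E) ⊆ hull ℝ t := by
  have : span ℝ s ≤ (hull ℝ t).lineal :=
    span_le.2 fun v hv => ⟨subset_hull (hs v hv).1, subset_hull (hs v hv).2⟩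
  exact fun v hv => (this hv).1

theorem exists_mem_hull_erase {s : Finset E} (hs : ¬ LinearIndepOn ℝ id (s : Set E)) {x : E}
    (hx : x ∈ hull ℝ (s : Set E)) : ∃ v ∈ s, x ∈ hull ℝ ((s.erase v : Finset E) : Set E) := by
  obtain ⟨f, hf, rfl⟩ := mem_hull_finset_iff.1 hx
  obtain ⟨c, hc, v₁, hv₁, hcv₁⟩ : ∃ c : E → ℝ, ∑ v ∈ s, c v • v = 0 ∧ ∃ v ∈ s, 0 < c v := by
    rw [linearIndepOn_finset_iff] at hs
    push Not at hs
    obtain ⟨c, hc, v, hv, hcv⟩ := hs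
    rcases hcv.lt_or_gt with hneg | hpos
    · exact ⟨-c, by simpa [neg_smul] using hc, v, hv, by simpa using hneg⟩
    · exact ⟨c, hc, v, hv, hpos⟩
  -- A minimal ratio `f v₀ / c v₀` keeps `f - l • c` nonnegative and kills its coefficient at `v₀`.
  obtain ⟨v₀, hv₀, hmin⟩ := (s.filter (0 < c ·)).exists_min_image (fun v => f v / c v)
    ⟨v₁, Finset.mem_filter.2 ⟨hv₁, hcv₁⟩⟩
  rw [Finset.mem_filter] at hv₀
  set l := f v₀ / c v₀
  have hl : 0 ≤ l := div_nonneg (hf v₀ hv₀.1) hv₀.2.le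
  refine ⟨v₀, hv₀.1, mem_hull_finset_iff.2 ⟨fun v => f v - l * c v, fun v hv => ?_, ?_⟩⟩
  · have hvs := Finset.mem_of_mem_erase hv
    rcases le_or_gt (c v) 0 with hcv | hcv
    · nlinarith [hf v hvs]
    · have := hmin v (Finset.mem_filter.2 ⟨hvs, hcv⟩)
      rw [le_div_iff₀ hcv] at this
      linarith
  · have hzero : (f v₀ - l * c v₀) • v₀ = 0 := by
      rw [div_mul_cancel₀ _ hv₀.2.ne', sub_self, zero_smul]
    rw [Finset.sum_erase (f := fun v => (f v - l * c v) • v) _ hzero]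
    simp only [sub_smul, mul_smul, Finset.sum_sub_distrib, ← Finset.smul_sum, hc, smul_zero,
      sub_zero]

theorem exists_linearIndepOn_of_mem_hull {G : Finset E} {x : E} (hx : x ∈ hull ℝ (G : Set E)) :
    ∃ s ⊆ G, LinearIndepOn ℝ id (s : Set E) ∧ x ∈ hull ℝ (s : Set E) := by
  induction G using Finset.strongInduction with
  | H G ih =>
    by_cases hG : LinearIndepOn ℝ id (G : Set E)
    · exact ⟨G, subset_rfl, hG, hx⟩
    · obtain ⟨v, hv, hxv⟩ := exists_mem_hull_erase hG hx
      obtain ⟨s, hs, hli, hxs⟩ := ih _ (Finset.erase_ssubset hv) hxv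
      exact ⟨s, hs.trans (Finset.erase_subset _ _), hli, hxs⟩

variable [TopologicalSpace E] [IsTopologicalAddGroup E] [ContinuousSMul ℝ E] [T2Space E]

theorem isClosed_hull_of_linearIndepOn {s : Finset E} (hs : LinearIndepOn ℝ id (s : Set E)) :
    IsClosed (hull ℝ (s : Set E) : Set E) := by
  let L := Fintype.linearCombination ℝ (fun v : s => (v : E))
  have hL : (hull ℝ (s : Set E) : Set E) = L '' Set.Ici 0 := by
    ext x
    rw [SetLike.mem_coe, ← Subtype.range_coe (s := (s : Set E)), mem_span_range_iff_exists_fun]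
    constructor
    · rintro ⟨c, rfl⟩
      exact ⟨fun v => c v, fun v => (c v).2, by simp [L, Fintype.linearCombination_apply]⟩
    · rintro ⟨t, ht, rfl⟩
      exact ⟨fun v => ⟨t v, ht v⟩, by simp [L, Fintype.linearCombination_apply]⟩
  have hinj : Injective L := linearIndependent_iff_injective_fintypeLinearCombination.1 hs
  rw [hL]
  exact (LinearMap.isClosedEmbedding_of_injective (LinearMap.ker_eq_bot.2 hinj)).isClosedMap _
    isClosed_Ici

theorem isClosed_hull_finset (G : Finset E) : IsClosed (hull ℝ (G : Set E) : Set E) := by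
  have hG : (hull ℝ (G : Set E) : Set E) =
      ⋃ (s : Finset E) (_ : s ∈ G.powerset.filter
        fun s : Finset E => LinearIndepOn ℝ id (s : Set E)), (hull ℝ (s : Set E) : Set E) := by
    ext x
    simp only [SetLike.mem_coe, Set.mem_iUnion, Finset.mem_filter, Finset.mem_powerset,
      exists_prop]
    constructor
    · intro hx
      obtain ⟨s, hsG, hli, hxs⟩ := exists_linearIndepOn_of_mem_hull hx
      exact ⟨s, ⟨hsG, hli⟩, hxs⟩
    · rintro ⟨s, ⟨hsG, -⟩, hxs⟩
      exact span_mono (Finset.coe_subset.2 hsG) hxs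
  rw [hG]
  exact isClosed_biUnion_finset fun s hs =>
    isClosed_hull_of_linearIndepOn (Finset.mem_filter.1 hs).2

theorem mem_interior_hull_or_mem_span [FiniteDimensional ℝ E] {G : Finset E} {x : E}
    (hx : x ∈ hull ℝ (G : Set E)) :
    x ∈ interior (hull ℝ (G : Set E) : Set E) ∨
      ∃ t ⊆ (G : Set E), span ℝ t ≠ ⊤ ∧ x ∈ span ℝ t := by
  obtain ⟨s, hsG, hli, hxs⟩ := exists_linearIndepOn_of_mem_hull hx
  by_cases hsp : span ℝ (s : Set E) = ⊤
  swap
  · exact Or.inr ⟨s, Finset.coe_subset.2 hsG, hsp, hull_le_span ℝ _ hxs⟩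
  let B := Module.Basis.mk hli (by simpa using hsp.ge)
  have hB : ∀ i, B i = i := fun i => Module.Basis.mk_apply _ _ _
  have hBs : ∀ i, B i ∈ (G : Set E) := fun i => by rw [hB]; exact hsG i.2
  by_cases hpos : ∀ i, 0 < B.repr x i
  · refine Or.inl (mem_interior.2 ⟨{y | ∀ i, 0 < B.repr y i}, fun y hy => ?_, ?_, hpos⟩)
    · rw [← B.sum_repr y]
      exact sum_mem fun i _ => smul_mem _ (hy i).le (subset_hull (hBs i))
    · simp only [Set.ofPred_forall]
      exact isOpen_iInter_of_finite fun i =>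
        isOpen_lt continuous_const ((B.coord i).continuous_of_finiteDimensional)
  · push Not at hpos
    obtain ⟨i, hi⟩ := hpos
    have hxi : B.repr x i = 0 := le_antisymm hi
      (nonneg_of_mem_hull (B.coord i) (fun v hv => by
        obtain ⟨j, rfl⟩ : ∃ j, B j = v := ⟨⟨v, hv⟩, hB _⟩
        simp [Finsupp.single_apply, apply_ite]) hxs)
    refine Or.inr ⟨B '' {j | j ≠ i}, ?_, ?_, ?_⟩
    · rintro _ ⟨j, -, rfl⟩; exact hBs j
    · exact fun h => (B.linearIndependent.notMem_span_image (s := {j | j ≠ i}) (x := i)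
        (by simp)) (h ▸ Submodule.mem_top)
    · rw [B.mem_span_image]
      rintro j hj rfl
      exact Finsupp.mem_support_iff.1 hj hxi

end PointedCone

theorem List.sum_map_filter_eq_sum_ite {α M : Type*} [AddCommMonoid M] (l : List α)
    (p : α → Bool) (f : α → M) :
    ((l.filter p).map f).sum = ∑ i : Fin l.length, if p (l.get i) then f (l.get i) else 0 := by
  simp only [List.get_eq_getElem]
  rw [Fin.sum_univ_fun_getElem l (fun a => if p a then f a else 0)]
  induction l with
  | nil => simp
  | cons a l ih => by_cases h : p a <;> simp [h, ih]

section Lattice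

variable {ι : Type*}

theorem castV_zero : castV (0 : ZLat ι) = 0 := by ext; simp [castV]

theorem castV_add (a b : ZLat ι) : castV (a + b) = castV a + castV b := by ext; simp [castV]

theorem castV_neg (a : ZLat ι) : castV (-a) = -castV a := by ext; simp [castV]

theorem castV_sub (a b : ZLat ι) : castV (a - b) = castV a - castV b := by ext; simp [castV]

theorem castV_list_sum (l : List (ZLat ι)) : castV l.sum = (l.map castV).sum := by
  induction l <;> simp [castV_zero, castV_add, *]

theorem castV_sum_smul {κ : Type*} [Fintype κ] (k : κ → ℕ) (v : κ → ZLat ι) :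
    castV (∑ i, (k i : ℤ) • v i) = ∑ i, (k i : ℝ) • castV (v i) := by
  ext j
  simp [castV, Finset.sum_apply]

theorem castV_mem_hull_of_partFn_ne_zero {Y : List (ZLat ι)} {γ : ZLat ι} (h : partFn Y γ ≠ 0) :
    castV γ ∈ hull ℝ (castV '' {a | a ∈ Y}) := by
  obtain ⟨⟨k, rfl⟩⟩ := (Nat.card_ne_zero.1 (Nat.cast_ne_zero.1 h)).1
  rw [castV_sum_smul]
  exact sum_mem fun i _ => PointedCone.smul_mem _ (Nat.cast_nonneg _)
    (subset_hull ⟨_, Y.get_mem i, rfl⟩)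

variable [Fintype ι]

theorem partFn_nil : partFn ([] : List (ZLat ι)) = delta0 := by
  ext γ
  rcases eq_or_ne γ 0 with rfl | h
  · simp [partFn, delta0]
  · have : IsEmpty {k : Fin 0 → ℕ // 0 = γ} := ⟨fun k => h k.2.symm⟩
    simp [partFn, delta0, h]

theorem conv_delta0 (g : ZLat ι → ℤ) : conv delta0 g = g := by
  ext γ
  rw [conv, finsum_eq_single _ γ fun μ hμ => by simp [delta0, sub_eq_zero, Ne.symm hμ]]
  simp [delta0]

theorem PF_top (X : List (ZLat ι)) (u : Amb ι) : PF X ⊤ u = delta0 := by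
  ext γ
  simp [PF, _root_.negPart, signedOut, outSub, partFn_nil]

end Lattice

section Cone

variable {ι : Type*} [Fintype ι]

theorem dotR_eq_dotProductBilin (u v : Amb ι) : dotR u v = dotProductBilin ℝ ℝ u v := rfl

theorem dotR_neg (u v : Amb ι) : dotR u (-v) = -dotR u v := by
  simp [dotR_eq_dotProductBilin]

/-- The vectors `±a`, `a ∈ X`, on which `u` is nonnegative. When `u` is regular for `r`,
their cone is `r + C(A, -B)`, with `A, B` the parts of `X \ r` positive and negative on `u`. -/
noncomputable def coneGens (X : List (ZLat ι)) (u : Amb ι) : Finset (Amb ι) :=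
  (X.map castV ++ X.map (fun a => -castV a)).toFinset.filter (0 ≤ dotR u ·)

theorem mem_coneGens {X : List (ZLat ι)} {u v : Amb ι} :
    v ∈ coneGens X u ↔ (∃ a ∈ X, castV a = v ∨ -castV a = v) ∧ 0 ≤ dotR u v := by
  simp only [coneGens, Finset.mem_filter, List.mem_toFinset, List.mem_append, List.mem_map,
    ← exists_or, ← and_or_left]

theorem dotR_nonneg_of_mem_hull_coneGens {X : List (ZLat ι)} {u y : Amb ι}
    (hy : y ∈ hull ℝ (coneGens X u : Set (Amb ι))) : 0 ≤ dotR u y :=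
  nonneg_of_mem_hull (dotProductBilin ℝ ℝ u) (fun _ hv => (mem_coneGens.1 hv).2) hy

theorem spanOf_subset_hull_coneGens {X Y : List (ZLat ι)} (hYX : ∀ a ∈ Y, a ∈ X) {u : Amb ι}
    (hu : ∀ v ∈ spanOf Y, dotR u v = 0) :
    (spanOf Y : Set (Amb ι)) ⊆ hull ℝ (coneGens X u : Set (Amb ι)) := by
  refine span_subset_hull fun _ ⟨a, ha, hav⟩ => ?_
  have hdot := hu _ (subset_span ⟨a, ha, hav⟩)
  refine ⟨mem_coneGens.2 ⟨⟨a, hYX a ha, Or.inl hav⟩, hdot.ge⟩,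
    mem_coneGens.2 ⟨⟨a, hYX a ha, Or.inr (by rw [hav])⟩, ?_⟩⟩
  rw [dotR_neg, hdot, neg_zero]

theorem castV_mem_coneGens_of_mem_signedOut {X : List (ZLat ι)} {r : Submodule ℝ (Amb ι)}
    {u : Amb ι} {a : ZLat ι} (ha : a ∈ signedOut X r u) : castV a ∈ coneGens X u := by
  obtain ⟨b, hb, rfl⟩ := List.mem_map.1 ha
  have hbX : b ∈ X := (List.mem_filter.1 hb).1
  split_ifs with hpos
  · exact mem_coneGens.2 ⟨⟨b, hbX, Or.inl rfl⟩, hpos.le⟩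
  · rw [castV_neg]
    exact mem_coneGens.2 ⟨⟨b, hbX, Or.inr rfl⟩, by rw [dotR_neg]; linarith⟩

theorem castV_add_negPart_sum_mem_hull {X : List (ZLat ι)} {r : Submodule ℝ (Amb ι)}
    {u : Amb ι} {ν : ZLat ι} (h : PF X r u ν ≠ 0) :
    castV (ν + (negPart X r u).sum) ∈ hull ℝ (coneGens X u : Set (Amb ι)) := by
  have hpart : partFn (signedOut X r u) (ν + (negPart X r u).sum) ≠ 0 :=
    right_ne_zero_of_mul h
  refine span_mono ?_ (castV_mem_hull_of_partFn_ne_zero hpart)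
  rintro _ ⟨a, ha, rfl⟩
  exact castV_mem_coneGens_of_mem_signedOut ha

theorem negPart_eq_filter {X : List (ZLat ι)} {r : Submodule ℝ (Amb ι)} {u : Amb ι}
    (hu : ∀ v ∈ r, dotR u v = 0) :
    negPart X r u = X.filter (fun a => decide (dotR u (castV a) < 0)) := by
  rw [_root_.negPart, outSub, List.filter_filter]
  refine List.filter_congr fun a _ => ?_
  by_cases ha : castV a ∈ r <;> simp [ha, hu]

theorem sub_castV_negPart_sum_mem_hull {X : List (ZLat ι)} {r : Submodule ℝ (Amb ι)}
    {u : Amb ι} (hu : ∀ v ∈ r, dotR u v = 0) {z : Amb ι} (hz : z ∈ zono X) :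
    z - castV (negPart X r u).sum ∈ hull ℝ (coneGens X u : Set (Amb ι)) := by
  obtain ⟨t, ht, rfl⟩ := hz
  rw [negPart_eq_filter hu, castV_list_sum, List.sum_map_filter_eq_sum_ite,
    ← Finset.sum_sub_distrib]
  refine sum_mem fun i _ => ?_
  set a := X.get i
  have haX : a ∈ X := X.get_mem i
  split_ifs with hneg <;> simp only [decide_eq_true_eq] at hneg
  · rw [show t i • castV a - castV a = (1 - t i) • -castV a by module]
    refine PointedCone.smul_mem _ (by linarith [(ht i).2]) (subset_hull ?_)
    exact mem_coneGens.2 ⟨⟨a, haX, Or.inr rfl⟩, by rw [dotR_neg]; linarith⟩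
  · rw [sub_zero]
    exact PointedCone.smul_mem _ (ht i).1
      (subset_hull (mem_coneGens.2 ⟨⟨a, haX, Or.inl rfl⟩, not_lt.1 hneg⟩))

end Cone

section Tope

variable {ι : Type*}

theorem isRational_span {X : List (ZLat ι)} {t : Set (Amb ι)}
    (ht : ∀ v ∈ t, ∃ a ∈ X, castV a = v ∨ -castV a = v) : IsRational X (span ℝ t) := by
  refine ⟨X.filter (fun a => decide (castV a ∈ span ℝ t)), fun a ha => (List.mem_filter.1 ha).1,
    le_antisymm ?_ ?_⟩
  · refine span_le.2 fun v hv => ?_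
    obtain ⟨a, haX, hav⟩ := ht v hv
    have hat : castV a ∈ span ℝ t := by
      rcases hav with rfl | rfl
      · exact subset_span hv
      · simpa using neg_mem (Submodule.subset_span (R := ℝ) hv)
    have ha : castV a ∈ spanOf (X.filter (fun a => decide (castV a ∈ span ℝ t))) :=
      subset_span ⟨a, List.mem_filter.2 ⟨haX, by simpa using hat⟩, rfl⟩
    rcases hav with rfl | rfl
    · exact ha
    · exact neg_mem ha
  · refine span_le.2 ?_
    rintro _ ⟨a, ha, rfl⟩
    simpa using (List.mem_filter.1 ha).2

variable [Fintype ι]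

theorem IsRational.exists_hyperplane_ge {X : List (ZLat ι)} {W : Submodule ℝ (Amb ι)}
    (hW : IsRational X W) (hlt : W < spanOf X) :
    ∃ H, IsRational X H ∧ Module.finrank ℝ H + 1 = Module.finrank ℝ (spanOf X) ∧ W ≤ H := by
  induction W using WellFoundedGT.induction with
  | _ W ih =>
  by_cases hcodim : Module.finrank ℝ W + 1 = Module.finrank ℝ (spanOf X)
  · exact ⟨W, hW, hcodim, le_rfl⟩
  obtain ⟨Y, hYX, rfl⟩ := hW
  obtain ⟨a, haX, ha⟩ : ∃ a ∈ X, castV a ∉ spanOf Y := by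
    by_contra! h
    exact hlt.not_ge (span_le.2 fun _ ⟨a, ha, hav⟩ => hav ▸ h a ha)
  have hsup : spanOf (a :: Y) = span ℝ {castV a} ⊔ spanOf Y := by
    rw [spanOf, spanOf, ← span_union, ← Set.image_singleton, ← Set.image_union]
    congr 2
    ext; simp
  have hYaY : spanOf Y < spanOf (a :: Y) :=
    SetLike.lt_iff_le_and_exists.2 ⟨hsup ▸ le_sup_right, castV a,
      hsup ▸ mem_sup_left (mem_span_singleton_self _), ha⟩
  have hrank : Module.finrank ℝ (spanOf (a :: Y)) ≤ Module.finrank ℝ (spanOf Y) + 1 := by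
    have h1 := finrank_add_le_finrank_add_finrank (span ℝ {castV a}) (spanOf Y)
    rw [finrank_span_singleton fun h => ha (by rw [h]; exact zero_mem _)] at h1
    rw [hsup]
    omega
  have haYX : ∀ b ∈ a :: Y, b ∈ X := fun b hb => by
    rcases List.mem_cons.1 hb with rfl | hb
    · exact haX
    · exact hYX b hb
  have hlt' : spanOf (a :: Y) < spanOf X := by
    refine lt_of_le_of_ne (span_mono (Set.image_mono haYX)) fun h => hcodim ?_
    have := finrank_lt_finrank_of_lt hlt
    rw [h] at hrank
    omega
  obtain ⟨H, hH, hHrank, hH'⟩ := ih _ hYaY ⟨a :: Y, haYX, rfl⟩ hlt'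
  exact ⟨H, hH, hHrank, hYaY.le.trans hH'⟩

theorem mem_hyperUnion_of_mem_span {X : List (ZLat ι)} (hspan : spanOf X = ⊤) {u : Amb ι}
    {t : Set (Amb ι)} (ht : t ⊆ coneGens X u) (htop : span ℝ t ≠ ⊤) {x : Amb ι}
    (hx : x ∈ span ℝ t) : x ∈ hyperUnion X := by
  have hrat := isRational_span fun v hv => (mem_coneGens.1 (ht hv)).1
  obtain ⟨H, hH, hHrank, hle⟩ := hrat.exists_hyperplane_ge (hspan ▸ lt_top_iff_ne_top.2 htop)
  exact ⟨H, hH, hHrank, hle hx⟩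

theorem IsTope.disjoint_hull_coneGens {X : List (ZLat ι)} (hspan : spanOf X = ⊤)
    {τ : Set (Amb ι)} (hτ : IsTope X τ) {u x₀ : Amb ι} (hx₀ : x₀ ∈ τ) (hneg : dotR u x₀ < 0) :
    Disjoint τ (hull ℝ (coneGens X u : Set (Amb ι))) := by
  obtain ⟨v, -, rfl⟩ := hτ
  set S : Set (Amb ι) := (hull ℝ (coneGens X u : Set (Amb ι)) : Set (Amb ι))
  have hcover : connectedComponentIn ((spanOf X : Set (Amb ι)) \ hyperUnion X) v ⊆
      Sᶜ ∪ interior S := by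
    intro w hw
    by_cases hwS : w ∈ S
    · rcases mem_interior_hull_or_mem_span hwS with h | ⟨t, ht, htop, hwt⟩
      · exact Or.inr h
      · exact absurd (mem_hyperUnion_of_mem_span hspan ht htop hwt)
          (connectedComponentIn_subset _ _ hw).2
    · exact Or.inl hwS
  refine Set.disjoint_left.2 (isPreconnected_connectedComponentIn.subset_left_of_subset_union
    (isClosed_hull_finset _).isOpen_compl isOpen_interior
    (disjoint_compl_left.mono_right interior_subset) hcover
    ⟨x₀, hx₀, fun h => hneg.not_ge (dotR_nonneg_of_mem_hull_coneGens h)⟩)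

theorem conv_PF_eq_zero {X : List (ZLat ι)} (hspan : spanOf X = ⊤) {τ : Set (Amb ι)}
    (hτ : IsTope X τ) {r : Submodule ℝ (Amb ι)} (hr : IsRational X r) {u x₀ : Amb ι}
    (hu : Reg X r u) (hx₀ : x₀ ∈ τ) (hneg : dotR u x₀ < 0) {g : ZLat ι → ℤ}
    (hg : support g ⊆ {γ | castV γ ∈ r}) {γ : ZLat ι} (hγ : castV γ ∈ sdiffSet τ (zono X)) :
    conv (PF X r u) g γ = 0 := by
  obtain ⟨y, hy, z, hz, hyz⟩ := hγ
  obtain ⟨Y, hYX, rfl⟩ := hr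
  refine finsum_eq_zero_of_forall_eq_zero fun μ => ?_
  by_contra h
  obtain ⟨hPF, hgμ⟩ := mul_ne_zero_iff.1 h
  have hy' : y = castV μ + castV (γ - μ + (negPart X (spanOf Y) u).sum) +
      (z - castV (negPart X (spanOf Y) u).sum) := by
    rw [castV_add, castV_sub, show y = castV γ + z by rw [hyz]; abel]
    abel
  refine Set.disjoint_left.1 (hτ.disjoint_hull_coneGens hspan hx₀ hneg) hy ?_
  rw [hy']
  exact add_mem (add_mem (spanOf_subset_hull_coneGens hYX hu.1 (hg hgμ))
    (castV_add_negPart_sum_mem_hull hPF)) (sub_castV_negPart_sum_mem_hull hu.1 hz)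

theorem localization_general {ι : Type*} [Fintype ι] (X : List (ZLat ι))
    (hspan : spanOf X = ⊤)
    (τ : Set (Amb ι)) (hτ : IsTope X τ)
    (u : Submodule ℝ (Amb ι) → Amb ι) (hu : ∀ r, IsRational X r → Reg X r (u r))
    (hneg : ∀ r, IsRational X r → r ≠ ⊤ → ∃ x₀ ∈ τ, dotR (u r) x₀ < 0)
    (f : ZLat ι → ℤ)
    (g : Submodule ℝ (Amb ι) → (ZLat ι → ℤ))
    (hg₁ : ∀ r, IsRational X r → memDMrel X r (g r))
    (hg₂ : ∀ r, ¬ IsRational X r → g r = 0)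
    (hdec : ∀ γ, f γ = ∑ᶠ r, conv (PF X r (u r)) (g r) γ) :
    memDM X (conv (PF X ⊤ (u ⊤)) (g ⊤)) ∧
    ∀ γ : ZLat ι, castV γ ∈ sdiffSet τ (zono X) →
      f γ = conv (PF X ⊤ (u ⊤)) (g ⊤) γ := by
  have htop : IsRational X ⊤ := ⟨X, fun _ h => h, hspan.symm⟩
  refine ⟨?_, fun γ hγ => ?_⟩
  · simpa [PF_top, conv_delta0, inSub] using (hg₁ ⊤ htop).2
  · rw [hdec γ, finsum_eq_single _ ⊤ fun r hr => ?_]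
    by_cases hrat : IsRational X r
    · obtain ⟨x₀, hx₀, hux₀⟩ := hneg r hrat hr
      exact conv_PF_eq_zero hspan hτ hrat (hu r hrat) hx₀ hux₀ (hg₁ r hrat).1 hγ
    · simp [hg₂ r hrat, conv]

/-- Localization theorem: let `τ` be a tope and `(F_r ∋ u r)` an `X`-regular collection
non-positive on `τ`.  If `f ∈ 𝓕(X)` has `F`-decomposition `f = ∑_r 𝓟_{X\r}^{F_r} * g_r`,
then the component for `r = V` lies in `DM(X)` and coincides with `f` on
`Γ ∩ (τ - B(X))`. -/
theorem localization {ι : Type*} [Fintype ι] (X : List (ZLat ι))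
    (hX0 : ∀ a ∈ X, a ≠ 0) (hspan : spanOf X = ⊤)
    (τ : Set (Amb ι)) (hτ : IsTope X τ)
    (u : Submodule ℝ (Amb ι) → Amb ι) (hu : ∀ r, IsRational X r → Reg X r (u r))
    (hneg : ∀ r, IsRational X r → r ≠ ⊤ → ∃ x₀ ∈ τ, dotR (u r) x₀ < 0)
    (f : ZLat ι → ℤ) (hf : memF X f)
    (g : Submodule ℝ (Amb ι) → (ZLat ι → ℤ))
    (hg₁ : ∀ r, IsRational X r → memDMrel X r (g r))
    (hg₂ : ∀ r, ¬ IsRational X r → g r = 0)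
    (hdec : ∀ γ, f γ = ∑ᶠ r, conv (PF X r (u r)) (g r) γ) :
    memDM X (conv (PF X ⊤ (u ⊤)) (g ⊤)) ∧
    ∀ γ : ZLat ι, castV γ ∈ sdiffSet τ (zono X) →
      f γ = conv (PF X ⊤ (u ⊤)) (g ⊤) γ :=
  localization_general X hspan τ hτ u hu hneg f g hg₁ hg₂ hdec

end Tope
end
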